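/- Let E11 ∈ ℝ^{n1×n1} be invertible, A12 ∈ ℝ^{n1×n2} have full column rank with A12ᵀE11⁻¹A12 invertible, Π = I_{n1} − A12(A12ᵀE11⁻¹A12)⁻¹A12ᵀE11⁻¹, R = I_{n1} − A12(A12ᵀA12)⁻¹A12ᵀ, and let Ĩ ∈ ℝ^{n1×(n1−n2)} satisfy that RĨ has full column rank. Let k be a positive integer, L ∈ ℝ^{n1^k×n1^k}, and b ∈ ℝ^{n1^k}. If a vector ŵ ∈ ℝ^{n1^k} satisfies (Πᵀ)^{⊗k} ŵ = ŵ and Π^{⊗k}(L ŵ − b) = 0, then M_k^{Ĩ}(A12)ᵀ ŵ = 0 and there exists a vector Ω such that L ŵ + M_k^{Ĩ}(A12) Ω = b; i.e. (ŵ, Ω) solves the augmented saddle-point system [[L, M_k^{Ĩ}(A12)], [M_k^{Ĩ}(A12)ᵀ, 0]] (ŵ, Ω) = (b, 0). -/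

import Mathlib

/-!
Choose a splitting `Ĩ D + A12 C = 1` with `D A12 = 0`; it exists because `R Ĩ` spans the range
of the orthogonal projector `R`, which has rank `n1 - n2`. Since `Π A12 = 0` and every block of
`M_k^{Ĩ}(A12)` has `A12` as a Kronecker factor, `Π^{⊗k} M_k^{Ĩ}(A12) = 0`; transposing and using
`ŵ = (Πᵀ)^{⊗k} ŵ` gives `M_k^{Ĩ}(A12)ᵀ ŵ = 0`. Multiplying out blockwise,
`M_k^{Ĩ}(A12) M_k^{Dᵀ}(Cᵀ)ᵀ = ∑ᵢ (Ĩ D)^{⊗(i-1)} ⊗ A12 C ⊗ I^{⊗(k-i)}`, which telescopes to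
`1 - (Ĩ D)^{⊗k}`. As `D Π = D`, `(Ĩ D)^{⊗k} = (Ĩ D)^{⊗k} Π^{⊗k}` annihilates `L ŵ - b`, so
`Ω := -M_k^{Dᵀ}(Cᵀ)ᵀ (L ŵ - b)` works.
-/

open Matrix

noncomputable section

/-- Position-dependent Kronecker product of square matrices: the entry at
row `r` and column `c` is `∏ j, F j (r j) (c j)`. -/
def posKron {n k : ℕ} (F : Fin k → Matrix (Fin n) (Fin n) ℝ) :
    Matrix (Fin k → Fin n) (Fin k → Fin n) ℝ :=
  Matrix.of fun r c => ∏ j, F j (r j) (c j)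

/-- The `k`-fold Kronecker power `X^{⊗k}`. -/
def kronPow {n : ℕ} (k : ℕ) (X : Matrix (Fin n) (Fin n) ℝ) :
    Matrix (Fin k → Fin n) (Fin k → Fin n) ℝ :=
  posKron fun _ => X

/-- Number of columns of the `j`-th Kronecker factor in the `i`-th block of `M_k^B(A)`. -/
def mCol (q p n : ℕ) {k : ℕ} (i j : Fin k) : ℕ :=
  if j < i then q else if j = i then p else n

/-- The `i`-th block `B^{⊗(i-1)} ⊗ A ⊗ I_n^{⊗(k-i)}` of `M_k^B(A)`. -/
def mBlock {n p q k : ℕ} (B : Matrix (Fin n) (Fin q) ℝ) (A : Matrix (Fin n) (Fin p) ℝ)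
    (i : Fin k) : Matrix (Fin k → Fin n) (∀ j : Fin k, Fin (mCol q p n i j)) ℝ :=
  Matrix.of fun r c => ∏ j : Fin k,
    if h1 : j < i then B (r j) (Fin.cast (by simp [mCol, h1]) (c j))
    else if h2 : j = i then A (r j) (Fin.cast (by simp [mCol, h1, h2]) (c j))
    else (1 : Matrix (Fin n) (Fin n) ℝ) (r j) (Fin.cast (by simp [mCol, h1, h2]) (c j))

/-- The horizontal block concatenation `M_k^B(A)`, with blocks indexed by `i : Fin k`. -/
def mFull {n p q : ℕ} (k : ℕ) (B : Matrix (Fin n) (Fin q) ℝ) (A : Matrix (Fin n) (Fin p) ℝ) :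
    Matrix (Fin k → Fin n) (Σ i : Fin k, ∀ j : Fin k, Fin (mCol q p n i j)) ℝ :=
  Matrix.of fun r c => mBlock B A c.1 r c.2

namespace Matrix

section Projector

variable {m n p : Type*} [Fintype m] [Fintype n] [Fintype p] [DecidableEq n]

lemma isUnit_of_rank_eq_card {K : Type*} [Field K] {M : Matrix n n K}
    (h : M.rank = Fintype.card n) : IsUnit M := by
  rw [← mulVec_surjective_iff_isUnit]
  change Function.Surjective M.mulVecLin
  rw [← LinearMap.range_eq_top]
  apply Submodule.eq_top_of_finrank_eq
  rw [← rank, h, Module.finrank_fintype_fun_eq_card]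

lemma isUnit_transpose_mul_self_of_rank_eq {K : Type*} [Field K] [LinearOrder K]
    [IsStrictOrderedRing K] {A : Matrix m n K} (h : A.rank = Fintype.card n) :
    IsUnit (Aᵀ * A) :=
  isUnit_of_rank_eq_card (by rw [rank_transpose_mul_self, h])

lemma eq_zero_of_isIdempotentElem_of_trace_eq_zero {K : Type*} [Field K] [CharZero K]
    {X : Matrix n n K} (hX : IsIdempotentElem X) (htr : X.trace = 0) : X = 0 := by
  have hX' : IsIdempotentElem (toLin' X) := hX.map (toLinAlgEquiv' (R := K) (n := n))
  simpa using LinearMap.IsIdempotentElem.eq_zero_of_trace_eq_zero hX' (by rwa [trace_toLin'_eq])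

lemma eq_of_isIdempotentElem_of_trace_eq {K : Type*} [Field K] [CharZero K]
    {X Y : Matrix n n K} (hX : IsIdempotentElem X) (hY : IsIdempotentElem Y)
    (hXY : X * Y = Y) (hYX : Y * X = Y) (htr : X.trace = Y.trace) : X = Y := by
  rw [← sub_eq_zero]
  refine eq_zero_of_isIdempotentElem_of_trace_eq_zero ?_ (by rw [trace_sub, htr, sub_self])
  rw [IsIdempotentElem, Matrix.sub_mul, Matrix.mul_sub, Matrix.mul_sub, hX.eq, hY.eq, hXY, hYX]
  abel

variable {S : Type*} [CommRing S]

lemma transpose_mul_inv_mul_transpose (A : Matrix m n S) :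
    (A * (Aᵀ * A)⁻¹ * Aᵀ)ᵀ = A * (Aᵀ * A)⁻¹ * Aᵀ := by
  rw [transpose_mul, transpose_mul, transpose_transpose, transpose_nonsing_inv, transpose_mul,
    transpose_transpose, Matrix.mul_assoc]

lemma one_sub_mul_inv_mul_mul_self [DecidableEq m] {A : Matrix m n S} {Y : Matrix n m S}
    (h : IsUnit (Y * A)) : (1 - A * (Y * A)⁻¹ * Y) * A = 0 := by
  rw [Matrix.sub_mul, Matrix.one_mul, Matrix.mul_assoc, Matrix.mul_assoc,
    nonsing_inv_mul _ ((isUnit_iff_isUnit_det _).mp h), Matrix.mul_one, sub_self]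

lemma isIdempotentElem_mul_inv_mul {A : Matrix m n S} {Y : Matrix n m S} (h : IsUnit (Y * A)) :
    IsIdempotentElem (A * (Y * A)⁻¹ * Y) := by
  rw [IsIdempotentElem, Matrix.mul_assoc, ← Matrix.mul_assoc Y, ← Matrix.mul_assoc Y,
    mul_nonsing_inv _ ((isUnit_iff_isUnit_det _).mp h), Matrix.one_mul]

lemma trace_mul_inv_mul {A : Matrix m n S} {Y : Matrix n m S} (h : IsUnit (Y * A)) :
    (A * (Y * A)⁻¹ * Y).trace = Fintype.card n := by
  rw [trace_mul_comm, ← Matrix.mul_assoc, mul_nonsing_inv _ ((isUnit_iff_isUnit_det _).mp h),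
    trace_one]

/-- `R` and the orthogonal projector onto the range of `R B` are idempotents of equal trace, one
absorbing the other, hence equal; so `R B D = R` for `D := ((R B)ᵀ (R B))⁻¹ (R B)ᵀ`, and `1 - B D`
lies in the range of `A`. -/
lemma exists_mul_add_mul_eq_one {K : Type*} [Field K] [CharZero K] [DecidableEq m]
    [DecidableEq p] {A : Matrix m n K} (hA : IsUnit (Aᵀ * A)) (R : Matrix m m K)
    (hR : R = 1 - A * (Aᵀ * A)⁻¹ * Aᵀ) {B : Matrix m p K} (hB : IsUnit ((R * B)ᵀ * (R * B)))
    (hcard : Fintype.card p + Fintype.card n = Fintype.card m) :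
    ∃ (D : Matrix p m K) (C : Matrix n m K), B * D + A * C = 1 ∧ D * A = 0 := by
  have hRA : R * A = 0 := hR ▸ one_sub_mul_inv_mul_mul_self hA
  have hRt : Rᵀ = R := by
    rw [hR, transpose_sub, transpose_one, transpose_mul_inv_mul_transpose]
  have hR2 : IsIdempotentElem R := hR ▸ (isIdempotentElem_mul_inv_mul hA).one_sub
  set U := R * B with hU
  clear_value U
  have hRU : R * U = U := by rw [hU, ← Matrix.mul_assoc, hR2.eq]
  have hUR : Uᵀ * R = Uᵀ := by rw [← hRt, ← transpose_mul, hRU]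
  have hUA : Uᵀ * A = 0 := by rw [← hUR, Matrix.mul_assoc, hRA, Matrix.mul_zero]
  have hRproj : U * ((Uᵀ * U)⁻¹ * Uᵀ) = R := by
    rw [← Matrix.mul_assoc]
    refine (eq_of_isIdempotentElem_of_trace_eq hR2 (isIdempotentElem_mul_inv_mul hB)
      (by simp only [← Matrix.mul_assoc, hRU]) (by rw [Matrix.mul_assoc, hUR]) ?_).symm
    rw [trace_mul_inv_mul hB, hR, trace_sub, trace_one, trace_mul_inv_mul hA, ← hcard]
    push_cast
    ring
  set D := (Uᵀ * U)⁻¹ * Uᵀ with hD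
  clear_value D
  refine ⟨D, (Aᵀ * A)⁻¹ * Aᵀ * (1 - B * D), ?_, ?_⟩
  · have hP : A * (Aᵀ * A)⁻¹ * Aᵀ = 1 - R := by rw [hR, sub_sub_cancel]
    rw [← Matrix.mul_assoc A, ← Matrix.mul_assoc A, hP, Matrix.sub_mul, Matrix.one_mul,
      Matrix.mul_sub, Matrix.mul_one, ← Matrix.mul_assoc R B, ← hU, hRproj]
    abel
  · rw [hD, Matrix.mul_assoc, hUA, Matrix.mul_zero]

end Projector

section PiKron

variable {ι : Type*} [Fintype ι] {S : Type*} [CommSemiring S] {α β γ : ι → Type*}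

def piKron (F : ∀ i, Matrix (α i) (β i) S) : Matrix (∀ i, α i) (∀ i, β i) S :=
  of fun r c => ∏ i, F i (r i) (c i)

@[simp]
lemma piKron_apply (F : ∀ i, Matrix (α i) (β i) S) (r : ∀ i, α i) (c : ∀ i, β i) :
    piKron F r c = ∏ i, F i (r i) (c i) := rfl

lemma piKron_mul [DecidableEq ι] [∀ i, Fintype (β i)] (F : ∀ i, Matrix (α i) (β i) S)
    (G : ∀ i, Matrix (β i) (γ i) S) : piKron F * piKron G = piKron fun i => F i * G i := by
  ext r c
  simp only [mul_apply, piKron_apply, ← Finset.prod_mul_distrib]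
  rw [Finset.prod_univ_sum, Fintype.piFinset_univ]

lemma piKron_transpose (F : ∀ i, Matrix (α i) (β i) S) :
    (piKron F)ᵀ = piKron fun i => (F i)ᵀ := rfl

lemma piKron_one [DecidableEq ι] [∀ i, DecidableEq (α i)] :
    piKron (fun i => (1 : Matrix (α i) (α i) S)) = 1 := by
  ext r c
  by_cases h : r = c
  · subst h; simp
  · obtain ⟨i, hi⟩ := Function.ne_iff.mp h
    rw [one_apply_ne h, piKron_apply]
    exact Finset.prod_eq_zero (Finset.mem_univ i) (one_apply_ne hi)

lemma piKron_eq_zero {F : ∀ i, Matrix (α i) (β i) S} (i : ι) (h : F i = 0) : piKron F = 0 := by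
  ext r c
  exact Finset.prod_eq_zero (Finset.mem_univ i) (by simp [h])

lemma piKron_update_sub [DecidableEq ι] {S : Type*} [CommRing S] (F : ∀ i, Matrix (α i) (β i) S)
    (i : ι) (X Y : Matrix (α i) (β i) S) :
    piKron (Function.update F i (X - Y)) =
      piKron (Function.update F i X) - piKron (Function.update F i Y) := by
  ext r c
  simp only [piKron_apply, sub_apply, Fintype.prod_eq_mul_prod_compl i, Function.update_self]
  rw [sub_mul]
  congr 2 <;> refine Finset.prod_congr rfl fun j hj => ?_ <;>
    rw [Function.update_of_ne (Finset.mem_compl.mp hj ∘ Finset.mem_singleton.mpr),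
      Function.update_of_ne (Finset.mem_compl.mp hj ∘ Finset.mem_singleton.mpr)]

lemma sum_piKron_eq_one_sub {k : ℕ} {α S : Type*} [Fintype α] [DecidableEq α] [CommRing S]
    {P Q : Matrix α α S} (h : P + Q = 1) :
    ∑ i : Fin k, piKron (fun j => if j < i then P else if j = i then Q else 1) =
      1 - piKron fun _ : Fin k => P := by
  let T : ℕ → Matrix (Fin k → α) (Fin k → α) S :=
    fun m => piKron fun j : Fin k => if (j : ℕ) < m then P else 1
  have hterm (i : Fin k) :
      piKron (fun j => if j < i then P else if j = i then Q else 1) = T i - T (i + 1) := by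
    let G : Fin k → Matrix α α S := fun j => if (j : ℕ) < i then P else 1
    have hQ : Q = 1 - P := eq_sub_of_add_eq' h
    have e1 : (fun j => if j < i then P else if j = i then Q else 1) =
        Function.update G i (1 - P) := by
      funext j
      rcases lt_trichotomy j i with hj | rfl | hj
      · simp [G, hj, hj.ne]
      · simp [hQ]
      · simp [G, hj.ne', not_lt.mpr hj.le]
    have e2 : (fun j : Fin k => if (j : ℕ) < i then P else 1) = Function.update G i 1 := by
      rw [← Function.update_eq_self i G]
      simp [G]
    have e3 : (fun j : Fin k => if (j : ℕ) < i + 1 then P else 1) = Function.update G i P := by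
      funext j
      rcases lt_trichotomy j i with hj | rfl | hj
      · simp [G, hj, hj.ne, hj.le]
      · simp
      · simp [G, hj.ne', not_le.mpr hj, not_lt.mpr hj.le]
    simp only [T]
    rw [e1, e2, e3]
    exact piKron_update_sub G i 1 P
  rw [Finset.sum_congr rfl fun i _ => hterm i,
    Fin.sum_univ_eq_sum_range (fun m => T m - T (m + 1)), Finset.sum_range_sub']
  congr 1
  · simpa [T] using piKron_one
  · simp [T]

end PiKron

end Matrix

section KronPow

variable {n k : ℕ}

lemma kronPow_eq_piKron (X : Matrix (Fin n) (Fin n) ℝ) : kronPow k X = piKron fun _ => X := rfl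

lemma kronPow_mul (X Y : Matrix (Fin n) (Fin n) ℝ) :
    kronPow k X * kronPow k Y = kronPow k (X * Y) :=
  piKron_mul _ _

lemma kronPow_transpose (X : Matrix (Fin n) (Fin n) ℝ) : kronPow k Xᵀ = (kronPow k X)ᵀ := rfl

end KronPow

section BlockMatrix

variable {n p q k : ℕ}

def blockFactor (B : Matrix (Fin n) (Fin q) ℝ) (A : Matrix (Fin n) (Fin p) ℝ) (i j : Fin k) :
    Matrix (Fin n) (Fin (mCol q p n i j)) ℝ :=
  of fun t a =>
    if h1 : j < i then B t (Fin.cast (by simp [mCol, h1]) a)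
    else if h2 : j = i then A t (Fin.cast (by simp [mCol, h2]) a)
    else (1 : Matrix (Fin n) (Fin n) ℝ) t (Fin.cast (by simp [mCol, h1, h2]) a)

lemma mBlock_eq_piKron (B : Matrix (Fin n) (Fin q) ℝ) (A : Matrix (Fin n) (Fin p) ℝ) (i : Fin k) :
    mBlock B A i = piKron (blockFactor B A i) := rfl

lemma blockFactor_mul_transpose (B : Matrix (Fin n) (Fin q) ℝ) (A : Matrix (Fin n) (Fin p) ℝ)
    (B' : Matrix (Fin n) (Fin q) ℝ) (A' : Matrix (Fin n) (Fin p) ℝ) (i j : Fin k) :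
    blockFactor B A i j * (blockFactor B' A' i j)ᵀ =
      if j < i then B * B'ᵀ else if j = i then A * A'ᵀ else 1 := by
  ext t u
  simp only [mul_apply, transpose_apply, blockFactor, of_apply]
  split_ifs with h1 h2
  · exact Fintype.sum_equiv (finCongr (by simp [mCol, h1])) _ _ fun _ => rfl
  · exact Fintype.sum_equiv (finCongr (by simp [mCol, h2])) _ _ fun _ => rfl
  · refine (Fintype.sum_equiv (finCongr (show mCol q p n i j = n by simp [mCol, h1, h2])) _
      (fun x => (1 : Matrix (Fin n) (Fin n) ℝ) t x * (1 : Matrix (Fin n) (Fin n) ℝ)ᵀ x u)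
      fun _ => rfl).trans ?_
    rw [← mul_apply, transpose_one, Matrix.one_mul]

lemma mul_blockFactor_self_eq_zero {X : Matrix (Fin n) (Fin n) ℝ} (B : Matrix (Fin n) (Fin q) ℝ)
    {A : Matrix (Fin n) (Fin p) ℝ} (h : X * A = 0) (i : Fin k) :
    X * blockFactor B A i i = 0 := by
  ext s a
  simpa [blockFactor, mul_apply] using congrFun (congrFun h s) (Fin.cast (by simp [mCol]) a)

lemma mFull_mul_transpose_mFull (B : Matrix (Fin n) (Fin q) ℝ) (A : Matrix (Fin n) (Fin p) ℝ)
    (D : Matrix (Fin q) (Fin n) ℝ) (C : Matrix (Fin p) (Fin n) ℝ) :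
    mFull k B A * (mFull k Dᵀ Cᵀ)ᵀ =
      ∑ i : Fin k, piKron fun j => if j < i then B * D else if j = i then A * C else 1 := by
  ext r s
  have hblock (i : Fin k) : mBlock B A i * (mBlock Dᵀ Cᵀ i)ᵀ =
      piKron fun j => if j < i then B * D else if j = i then A * C else 1 := by
    simp only [mBlock_eq_piKron, piKron_transpose, piKron_mul, blockFactor_mul_transpose,
      transpose_transpose]
  rw [← Finset.sum_congr rfl fun i _ => hblock i]
  simp only [mul_apply, Fintype.sum_sigma, Matrix.sum_apply]
  rfl

lemma kronPow_mul_mFull_eq_zero {X : Matrix (Fin n) (Fin n) ℝ} (B : Matrix (Fin n) (Fin q) ℝ)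
    {A : Matrix (Fin n) (Fin p) ℝ} (h : X * A = 0) : kronPow k X * mFull k B A = 0 := by
  ext r ⟨i, c⟩
  have hblock : kronPow k X * mBlock B A i = 0 := by
    rw [kronPow_eq_piKron, mBlock_eq_piKron, piKron_mul]
    exact piKron_eq_zero i (mul_blockFactor_self_eq_zero B h i)
  exact congrFun (congrFun hblock r) c

end BlockMatrix

theorem stmt18_general {n1 n2 : ℕ} (E11 : Matrix (Fin n1) (Fin n1) ℝ)
    (A12 : Matrix (Fin n1) (Fin n2) ℝ) (hA : A12.rank = n2)
    (hS : IsUnit (A12ᵀ * E11⁻¹ * A12))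
    (Proj : Matrix (Fin n1) (Fin n1) ℝ)
    (hProj : Proj = 1 - A12 * (A12ᵀ * E11⁻¹ * A12)⁻¹ * A12ᵀ * E11⁻¹)
    (R : Matrix (Fin n1) (Fin n1) ℝ)
    (hR : R = 1 - A12 * (A12ᵀ * A12)⁻¹ * A12ᵀ)
    (Itil : Matrix (Fin n1) (Fin (n1 - n2)) ℝ)
    (hItil : (R * Itil).rank = n1 - n2)
    (k : ℕ)
    (L : Matrix (Fin k → Fin n1) (Fin k → Fin n1) ℝ)
    (b : (Fin k → Fin n1) → ℝ) (w : (Fin k → Fin n1) → ℝ)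
    (hw1 : (kronPow k Projᵀ).mulVec w = w)
    (hw2 : (kronPow k Proj).mulVec (L.mulVec w - b) = 0) :
    (mFull k Itil A12)ᵀ.mulVec w = 0
    ∧ ∃ Ω : (Σ i : Fin k, ∀ j : Fin k, Fin (mCol (n1 - n2) n2 n1 i j)) → ℝ,
        L.mulVec w + (mFull k Itil A12).mulVec Ω = b := by
  have hAA : IsUnit (A12ᵀ * A12) := isUnit_transpose_mul_self_of_rank_eq (by rwa [Fintype.card_fin])
  have hRI : IsUnit ((R * Itil)ᵀ * (R * Itil)) :=
    isUnit_transpose_mul_self_of_rank_eq (by rwa [Fintype.card_fin])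
  have hn : n2 ≤ n1 := hA ▸ A12.rank_le_height
  obtain ⟨D, C, hDC, hDA⟩ := exists_mul_add_mul_eq_one hAA R hR hRI (by simp only [Fintype.card_fin]; omega)
  have hProjA : Proj * A12 = 0 := by
    rw [hProj, Matrix.mul_assoc (A12 * _) A12ᵀ]
    exact one_sub_mul_inv_mul_mul_self hS
  have hDProj : D * Proj = D := by
    simp only [hProj, Matrix.mul_sub, Matrix.mul_one, ← Matrix.mul_assoc, hDA, Matrix.zero_mul,
      sub_zero]
  have hv : kronPow k (Itil * D) *ᵥ (L *ᵥ w - b) = 0 := by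
    rw [← hDProj, ← Matrix.mul_assoc, ← kronPow_mul, ← mulVec_mulVec, hw2, mulVec_zero]
  refine ⟨?_, -((mFull k Dᵀ Cᵀ)ᵀ *ᵥ (L *ᵥ w - b)), ?_⟩
  · rw [← hw1, kronPow_transpose, mulVec_mulVec, ← transpose_mul,
      kronPow_mul_mFull_eq_zero Itil hProjA, transpose_zero, zero_mulVec]
  · rw [mulVec_neg, mulVec_mulVec, mFull_mul_transpose_mFull, sum_piKron_eq_one_sub hDC,
      ← kronPow_eq_piKron, sub_mulVec, one_mulVec, hv, sub_zero]
    abel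

/-- With `Π = I - A12 (A12ᵀ E11⁻¹ A12)⁻¹ A12ᵀ E11⁻¹`, `R = I - A12 (A12ᵀ A12)⁻¹ A12ᵀ`
and `Ĩ` such that `R Ĩ` has full column rank: if `ŵ` satisfies `(Πᵀ)^{⊗k} ŵ = ŵ` and
`Π^{⊗k} (L ŵ - b) = 0`, then `M_k^{Ĩ}(A12)ᵀ ŵ = 0` and there exists `Ω` with
`L ŵ + M_k^{Ĩ}(A12) Ω = b`; i.e. `(ŵ, Ω)` solves the augmented saddle-point system. -/
theorem stmt18 {n1 n2 : ℕ} (E11 : Matrix (Fin n1) (Fin n1) ℝ) (hE : IsUnit E11)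
    (A12 : Matrix (Fin n1) (Fin n2) ℝ) (hA : A12.rank = n2)
    (hS : IsUnit (A12ᵀ * E11⁻¹ * A12))
    (Proj : Matrix (Fin n1) (Fin n1) ℝ)
    (hProj : Proj = 1 - A12 * (A12ᵀ * E11⁻¹ * A12)⁻¹ * A12ᵀ * E11⁻¹)
    (R : Matrix (Fin n1) (Fin n1) ℝ)
    (hR : R = 1 - A12 * (A12ᵀ * A12)⁻¹ * A12ᵀ)
    (Itil : Matrix (Fin n1) (Fin (n1 - n2)) ℝ)
    (hItil : (R * Itil).rank = n1 - n2)
    (k : ℕ) (hk : 0 < k)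
    (L : Matrix (Fin k → Fin n1) (Fin k → Fin n1) ℝ)
    (b : (Fin k → Fin n1) → ℝ) (w : (Fin k → Fin n1) → ℝ)
    (hw1 : (kronPow k Projᵀ).mulVec w = w)
    (hw2 : (kronPow k Proj).mulVec (L.mulVec w - b) = 0) :
    (mFull k Itil A12)ᵀ.mulVec w = 0
    ∧ ∃ Ω : (Σ i : Fin k, ∀ j : Fin k, Fin (mCol (n1 - n2) n2 n1 i j)) → ℝ,
        L.mulVec w + (mFull k Itil A12).mulVec Ω = b :=
  stmt18_general E11 A12 hA hS Proj hProj R hR Itil hItil k L b w hw1 hw2
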